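/- Let k be a field of characteristic zero, let f₁, …, f_d : [a,b] → ℝ be continuous functions arising as the increasing slopes of the Newton polygon NP_r(P) of a fixed monic polynomial P of degree d over K⟨α/t, t/β⟩ with respect to the norm |·|_{e^{−r}} (for r ∈ [−log β, −log α] = [a,b]), and set F_i = f₁ + ⋯ + f_i. Then each F_i is a concave function of r. -/
import Mathlib


open Filter Finset

/-- Coefficients of an element of `K⟨α/t, t/β⟩`. -/
def ConvergesOnClosedAnnulus {K : Type*} [NormedField K] (α β : ℝ) (a : ℤ → K) : Prop :=
  Tendsto (fun i : ℤ => ‖a i‖ * α ^ i) atBot (nhds 0) ∧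
  Tendsto (fun i : ℤ => ‖a i‖ * β ^ i) atTop (nhds 0)

/-- The `γ`-Gauss norm `|x|_γ = sup_i |aᵢ| γⁱ`. -/
noncomputable def gaussNormZ {K : Type*} [NormedField K] (a : ℤ → K) (γ : ℝ) : ℝ :=
  ⨆ i : ℤ, ‖a i‖ * γ ^ i

/-- The constant `1` ∈ `K⟨α/t, t/β⟩`. -/
def laurentOne (K : Type*) [NormedField K] : ℤ → K := fun i => if i = 0 then 1 else 0

/-- The value at abscissa `x` of the Newton polygon `NP_r(P)` of the polynomial `P`
(coefficients `P 0, …, P d` in `K⟨α/t, t/β⟩`) with respect to `|·|_{e^{−r}}`: the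
lower convex hull of the points `(−l, −log |P_l|_{e^{−r}})`, described as the
supremum of the affine minorants of those points. -/
noncomputable def newtonHull {K : Type*} [NormedField K] (P : ℕ → ℤ → K) (d : ℕ)
    (r x : ℝ) : ℝ :=
  sSup {y : ℝ | ∃ m c : ℝ, y = m * x + c ∧
    ∀ l ≤ d, P l ≠ 0 → m * (-(l : ℝ)) + c ≤ -Real.log (gaussNormZ (P l) (Real.exp (-r)))}

section NewtonHelpers

variable {K : Type*} [NormedField K]

lemma gaussNormZ_exp (a : ℤ → K) (r : ℝ) :
    gaussNormZ a (Real.exp (-r)) = ⨆ i : ℤ, ‖a i‖ * Real.exp (-r * (i : ℝ)) := by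
  unfold gaussNormZ
  congr 1
  funext i
  rw [Real.exp_mul, Real.rpow_intCast]

lemma term_le_sum {α β γ : ℝ} (hα : 0 < α) (h1 : α ≤ γ) (h2 : γ ≤ β)
    (c : ℝ) (hc : 0 ≤ c) (i : ℤ) :
    c * γ ^ i ≤ c * α ^ i + c * β ^ i := by
  have hγ : 0 < γ := lt_of_lt_of_le hα h1
  have hβ : 0 < β := lt_of_lt_of_le hγ h2
  rcases le_or_gt 0 i with hi | hi
  · have h3 : γ ^ i ≤ β ^ i := by
      lift i to ℕ using hi
      simpa [zpow_natCast] using pow_le_pow_left₀ hγ.le h2 i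
    nlinarith [zpow_pos hα i, mul_le_mul_of_nonneg_left h3 hc]
  · have h3 : γ ^ i ≤ α ^ i := by
      have hn : i = -((-i).toNat : ℤ) := by omega
      rw [hn, zpow_neg, zpow_neg, zpow_natCast, zpow_natCast]
      exact inv_anti₀ (pow_pos hα _) (pow_le_pow_left₀ hα.le h1 _)
    nlinarith [zpow_pos hβ i, mul_le_mul_of_nonneg_left h3 hc]

lemma bddAbove_gauss_terms {α β : ℝ} (hα : 0 < α) {a : ℤ → K}
    (ha : ConvergesOnClosedAnnulus α β a) {γ : ℝ} (h1 : α ≤ γ) (h2 : γ ≤ β) :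
    BddAbove (Set.range fun i : ℤ => ‖a i‖ * γ ^ i) := by
  have hγ : 0 < γ := lt_of_lt_of_le hα h1
  have hβ : 0 < β := lt_of_lt_of_le hγ h2
  have hαβ : α ≤ β := h1.trans h2
  have hαtop : Tendsto (fun i : ℤ => ‖a i‖ * α ^ i) atTop (nhds 0) := by
    apply squeeze_zero' (g := fun i : ℤ => ‖a i‖ * β ^ i)
    · exact Eventually.of_forall fun i => mul_nonneg (norm_nonneg _) (zpow_pos hα i).le
    · filter_upwards [eventually_ge_atTop (0 : ℤ)] with i hi
      refine mul_le_mul_of_nonneg_left ?_ (norm_nonneg _)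
      lift i to ℕ using hi
      simpa [zpow_natCast] using pow_le_pow_left₀ hα.le hαβ i
    · exact ha.2
  have hβbot : Tendsto (fun i : ℤ => ‖a i‖ * β ^ i) atBot (nhds 0) := by
    apply squeeze_zero' (g := fun i : ℤ => ‖a i‖ * α ^ i)
    · exact Eventually.of_forall fun i => mul_nonneg (norm_nonneg _) (zpow_pos hβ i).le
    · filter_upwards [eventually_le_atBot (0 : ℤ)] with i hi
      refine mul_le_mul_of_nonneg_left ?_ (norm_nonneg _)
      have hn : i = -((-i).toNat : ℤ) := by omega
      rw [hn, zpow_neg, zpow_neg, zpow_natCast, zpow_natCast]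
      exact inv_anti₀ (pow_pos hα _) (pow_le_pow_left₀ hα.le hαβ _)
    · exact ha.1
  have hg : Tendsto (fun i : ℤ => ‖a i‖ * α ^ i + ‖a i‖ * β ^ i) cofinite (nhds 0) := by
    rw [Int.cofinite_eq, tendsto_sup]
    exact ⟨by simpa using ha.1.add hβbot, by simpa using hαtop.add ha.2⟩
  obtain ⟨B, hB⟩ := hg.bddAbove_range_of_cofinite
  refine ⟨B, ?_⟩
  rintro y ⟨i, rfl⟩
  exact (term_le_sum hα h1 h2 _ (norm_nonneg _) i).trans (hB ⟨i, rfl⟩)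

lemma le_gauss {α β : ℝ} (hα : 0 < α) {a : ℤ → K}
    (ha : ConvergesOnClosedAnnulus α β a) {γ : ℝ} (h1 : α ≤ γ) (h2 : γ ≤ β) (i : ℤ) :
    ‖a i‖ * γ ^ i ≤ gaussNormZ a γ :=
  le_ciSup (bddAbove_gauss_terms hα ha h1 h2) i

lemma gauss_pos {α β : ℝ} (hα : 0 < α) {a : ℤ → K} (hne : a ≠ 0)
    (ha : ConvergesOnClosedAnnulus α β a) {γ : ℝ} (h1 : α ≤ γ) (h2 : γ ≤ β) :
    0 < gaussNormZ a γ := by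
  obtain ⟨j, hj⟩ := Function.ne_iff.mp hne
  have hγ : 0 < γ := lt_of_lt_of_le hα h1
  calc (0:ℝ) < ‖a j‖ * γ ^ j := mul_pos (norm_pos_iff.mpr hj) (zpow_pos hγ j)
    _ ≤ gaussNormZ a γ := le_gauss hα ha h1 h2 j

lemma exp_neg_mem {α β r : ℝ} (hα : 0 < α) (hβ : 0 < β)
    (hr : r ∈ Set.Icc (-Real.log β) (-Real.log α)) :
    α ≤ Real.exp (-r) ∧ Real.exp (-r) ≤ β := by
  obtain ⟨hr1, hr2⟩ := hr
  constructor
  · calc α = Real.exp (Real.log α) := (Real.exp_log hα).symm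
      _ ≤ Real.exp (-r) := Real.exp_le_exp.mpr (by linarith)
  · calc Real.exp (-r) ≤ Real.exp (Real.log β) := Real.exp_le_exp.mpr (by linarith)
      _ = β := Real.exp_log hβ

/-- Concavity (in `r`) of `-log |a|_{e^{-r}}`, in the form needed for convex combinations. -/
lemma gauss_mix {α β : ℝ} (hα : 0 < α) (hβ : 0 < β) {a : ℤ → K} (hne : a ≠ 0)
    (ha : ConvergesOnClosedAnnulus α β a) {r₁ r₂ t s : ℝ}
    (ht : 0 ≤ t) (hs : 0 ≤ s) (hts : t + s = 1)
    (hr₁ : r₁ ∈ Set.Icc (-Real.log β) (-Real.log α))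
    (hr₂ : r₂ ∈ Set.Icc (-Real.log β) (-Real.log α))
    (hr₃ : t * r₁ + s * r₂ ∈ Set.Icc (-Real.log β) (-Real.log α)) :
    t * (-Real.log (gaussNormZ a (Real.exp (-r₁))))
      + s * (-Real.log (gaussNormZ a (Real.exp (-r₂))))
      ≤ -Real.log (gaussNormZ a (Real.exp (-(t * r₁ + s * r₂)))) := by
  obtain ⟨h₁a, h₁b⟩ := exp_neg_mem hα hβ hr₁
  obtain ⟨h₂a, h₂b⟩ := exp_neg_mem hα hβ hr₂
  obtain ⟨h₃a, h₃b⟩ := exp_neg_mem hα hβ hr₃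
  set N₁ := gaussNormZ a (Real.exp (-r₁)) with hN₁def
  set N₂ := gaussNormZ a (Real.exp (-r₂)) with hN₂def
  have hN₁ : 0 < N₁ := gauss_pos hα hne ha h₁a h₁b
  have hN₂ : 0 < N₂ := gauss_pos hα hne ha h₂a h₂b
  have hN₃ : 0 < gaussNormZ a (Real.exp (-(t * r₁ + s * r₂))) := gauss_pos hα hne ha h₃a h₃b
  have key : gaussNormZ a (Real.exp (-(t * r₁ + s * r₂))) ≤ N₁ ^ t * N₂ ^ s := by
    rw [gaussNormZ_exp]
    apply ciSup_le
    intro i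
    have e1 : ‖a i‖ * Real.exp (-(t * r₁ + s * r₂) * i)
        = (‖a i‖ * Real.exp (-r₁ * i)) ^ t * (‖a i‖ * Real.exp (-r₂ * i)) ^ s := by
      rw [Real.mul_rpow (norm_nonneg _) (Real.exp_pos _).le,
          Real.mul_rpow (norm_nonneg _) (Real.exp_pos _).le,
          ← Real.exp_mul, ← Real.exp_mul, mul_mul_mul_comm,
          ← Real.rpow_add' (norm_nonneg _) (by rw [hts]; norm_num), hts, Real.rpow_one,
          ← Real.exp_add]
      congr 1
      ring
    have t1 : ‖a i‖ * Real.exp (-r₁ * i) ≤ N₁ := by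
      rw [Real.exp_mul, Real.rpow_intCast]
      exact le_gauss hα ha h₁a h₁b i
    have t2 : ‖a i‖ * Real.exp (-r₂ * i) ≤ N₂ := by
      rw [Real.exp_mul, Real.rpow_intCast]
      exact le_gauss hα ha h₂a h₂b i
    rw [e1]
    exact mul_le_mul
      (Real.rpow_le_rpow (mul_nonneg (norm_nonneg _) (Real.exp_pos _).le) t1 ht)
      (Real.rpow_le_rpow (mul_nonneg (norm_nonneg _) (Real.exp_pos _).le) t2 hs)
      (Real.rpow_nonneg (mul_nonneg (norm_nonneg _) (Real.exp_pos _).le) s)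
      (Real.rpow_nonneg hN₁.le t)
  have hlog := Real.log_le_log hN₃ key
  rw [Real.log_mul (Real.rpow_pos_of_pos hN₁ t).ne' (Real.rpow_pos_of_pos hN₂ s).ne',
      Real.log_rpow hN₁, Real.log_rpow hN₂] at hlog
  linarith

lemma gauss_laurentOne {γ : ℝ} (hγ : 0 < γ) : gaussNormZ (laurentOne K) γ = 1 := by
  unfold gaussNormZ laurentOne
  have hbd : ∀ i : ℤ, ‖(if i = 0 then (1:K) else 0)‖ * γ ^ i ≤ 1 := by
    intro i
    by_cases h : i = 0 <;> simp [h, zpow_pos hγ i |>.le]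
  apply le_antisymm
  · exact ciSup_le hbd
  · have h0 : (1:ℝ) = ‖(if (0:ℤ) = 0 then (1:K) else 0)‖ * γ ^ (0:ℤ) := by simp
    rw [h0]
    exact le_ciSup (f := fun i : ℤ => ‖(if i = 0 then (1:K) else 0)‖ * γ ^ i)
      ⟨1, by rintro y ⟨i, rfl⟩; exact hbd i⟩ (0:ℤ)

end NewtonHelpers

/-- Proposition (`P:newton`(d), Concavity): for a monic polynomial `P` of degree `d`
over `K⟨α/t, t/β⟩` (with nonzero constant coefficient, so that `NP_r(P)` has `d`
finite slopes `f₁(P,r) ≤ ⋯ ≤ f_d(P,r)`), each partial sum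
`F_i(P,r) = f₁(P,r) + ⋯ + f_i(P,r)` — equal to `NP_r(P)(−d+i) − NP_r(P)(−d)` — is a
concave function of `r ∈ [−log β, −log α]`. -/
theorem newton_partial_slope_sums_concave
    (K : Type*) [NormedField K] [CompleteSpace K] [IsUltrametricDist K] [CharZero K]
    (α β : ℝ) (hα : 0 < α) (hαβ : α ≤ β)
    (d : ℕ) (hd : 0 < d) (P : ℕ → ℤ → K)
    (hPconv : ∀ n, ConvergesOnClosedAnnulus α β (P n))
    (hPdeg : ∀ n, d < n → P n = 0)
    (hmonic : P d = laurentOne K)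
    (hP0 : P 0 ≠ 0) :
    ∀ i : ℕ, 1 ≤ i → i ≤ d →
      ConcaveOn ℝ (Set.Icc (-Real.log β) (-Real.log α))
        (fun r => newtonHull P d r (-(d : ℝ) + (i : ℝ)) - newtonHull P d r (-(d : ℝ))) := by
  classical
  intro i hi1 hid
  have hβ : 0 < β := lt_of_lt_of_le hα hαβ
  -- notation
  set C : ℕ → ℝ → ℝ := fun l r => -Real.log (gaussNormZ (P l) (Real.exp (-r))) with hC
  set S : ℝ → ℝ → Set ℝ := fun x r => {y : ℝ | ∃ m c : ℝ, y = m * x + c ∧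
    ∀ l ≤ d, P l ≠ 0 → m * (-(l : ℝ)) + c ≤ C l r} with hS
  have hHull : ∀ r x, newtonHull P d r x = sSup (S x r) := fun r x => rfl
  have hPd0 : P d ≠ 0 := by
    rw [hmonic]
    intro h
    have := congrFun h 0
    simp [laurentOne] at this
  have hCd : ∀ r, C d r = 0 := by
    intro r
    simp only [hC, hmonic, gauss_laurentOne (Real.exp_pos (-r)), Real.log_one, neg_zero]
  have hd' : (0:ℝ) < d := by exact_mod_cast hd
  -- nonemptiness of the sets of minorant values
  have hne : ∀ x r, (S x r).Nonempty := by
    intro x r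
    refine ⟨(Finset.range (d+1)).inf' ⟨0, by simp⟩ (fun l => C l r), 0,
      (Finset.range (d+1)).inf' ⟨0, by simp⟩ (fun l => C l r), by ring, ?_⟩
    intro l hl _
    simpa using Finset.inf'_le (fun l => C l r) (Finset.mem_range_succ_iff.mpr hl)
  -- boundedness above
  have hbdd : ∀ (j : ℕ), j ≤ d → ∀ r, ∀ y ∈ S (-(d:ℝ) + (j:ℝ)) r,
      y ≤ ((j:ℝ)/d) * C 0 r := by
    rintro j hj r y ⟨m, c, rfl, hcon⟩
    have h0 : m * (-(0:ℕ):ℝ) + c ≤ C 0 r := hcon 0 (Nat.zero_le _) hP0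
    have hD : m * (-(d:ℕ):ℝ) + c ≤ C d r := hcon d le_rfl hPd0
    rw [hCd] at hD
    simp only [Nat.cast_zero, neg_zero, mul_zero, zero_add] at h0
    have hjd : (j:ℝ) ≤ d := by exact_mod_cast hj
    have hj0 : (0:ℝ) ≤ j := by positivity
    rw [div_mul_eq_mul_div, le_div_iff₀ hd']
    nlinarith [mul_le_mul_of_nonneg_left hD (by linarith : (0:ℝ) ≤ (d:ℝ) - j),
      mul_le_mul_of_nonneg_left h0 hj0]
  have hbdd' : ∀ r, BddAbove (S (-(d:ℝ) + (i:ℝ)) r) :=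
    fun r => ⟨((i:ℝ)/d) * C 0 r, fun y hy => hbdd i hid r y hy⟩
  -- the hull at -d is identically 0
  have hzero : ∀ r, newtonHull P d r (-(d:ℝ)) = 0 := by
    intro r
    have hub : ∀ y ∈ S (-(d:ℝ)) r, y ≤ 0 := by
      rintro y ⟨m, c, rfl, hcon⟩
      have hD := hcon d le_rfl hPd0
      rwa [hCd] at hD
    have hmem : (0:ℝ) ∈ S (-(d:ℝ)) r := by
      set m : ℝ := (Finset.range (d+1)).inf' ⟨0, by simp⟩
        (fun l => if l < d ∧ P l ≠ 0 then C l r / ((d:ℝ) - l) else 0) with hm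
      refine ⟨m, m * d, by ring, ?_⟩
      intro l hl hP
      rcases eq_or_lt_of_le hl with rfl | hl'
      · rw [hCd]
        have : m * (-(l:ℝ)) + m * l = 0 := by ring
        linarith
      · have hml : m ≤ C l r / ((d:ℝ) - l) := by
          have := Finset.inf'_le (f := fun l => if l < d ∧ P l ≠ 0 then C l r / ((d:ℝ) - l) else 0)
            (b := l) (Finset.mem_range_succ_iff.mpr hl)
          rwa [if_pos ⟨hl', hP⟩] at this
        have hdl : (0:ℝ) < (d:ℝ) - l := by
          have : (l:ℝ) < d := by exact_mod_cast hl'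
          linarith
        have := (le_div_iff₀ hdl).mp hml
        nlinarith
    rw [hHull]
    exact le_antisymm (csSup_le ⟨0, hmem⟩ hub) (le_csSup ⟨0, hub⟩ hmem)
  -- main concavity argument
  refine ⟨convex_Icc _ _, ?_⟩
  intro r₁ hr₁ r₂ hr₂ t s ht hs hts
  simp only [smul_eq_mul, hzero, sub_zero]
  have hrt : t * r₁ + s * r₂ ∈ Set.Icc (-Real.log β) (-Real.log α) := by
    have := (convex_Icc (-Real.log β) (-Real.log α)) hr₁ hr₂ ht hs hts
    simpa using this
  rcases eq_or_lt_of_le ht with rfl | ht'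
  · have hs1 : s = 1 := by linarith
    simp [hs1]
  rcases eq_or_lt_of_le hs with rfl | hs'
  · have ht1 : t = 1 := by linarith
    simp [ht1]
  set x : ℝ := -(d:ℝ) + (i:ℝ) with hx
  -- key upper bound
  have Hub : ∀ y₁ ∈ S x r₁, ∀ y₂ ∈ S x r₂, t * y₁ + s * y₂ ≤ newtonHull P d (t * r₁ + s * r₂) x := by
    rintro y₁ ⟨m₁, c₁, rfl, hcon₁⟩ y₂ ⟨m₂, c₂, rfl, hcon₂⟩
    rw [hHull]
    refine le_csSup (hbdd' _) ⟨t * m₁ + s * m₂, t * c₁ + s * c₂, by ring, ?_⟩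
    intro l hl hP
    have h₁ := hcon₁ l hl hP
    have h₂ := hcon₂ l hl hP
    have hmix := gauss_mix (a := P l) hα hβ hP (hPconv l) ht hs hts hr₁ hr₂ hrt
    have e : (t * m₁ + s * m₂) * (-(l:ℝ)) + (t * c₁ + s * c₂)
        = t * (m₁ * (-(l:ℝ)) + c₁) + s * (m₂ * (-(l:ℝ)) + c₂) := by ring
    rw [e]
    calc t * (m₁ * (-(l:ℝ)) + c₁) + s * (m₂ * (-(l:ℝ)) + c₂)
        ≤ t * C l r₁ + s * C l r₂ := by
          have := mul_le_mul_of_nonneg_left h₁ ht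
          have := mul_le_mul_of_nonneg_left h₂ hs
          linarith
      _ ≤ C l (t * r₁ + s * r₂) := hmix
  have h1 : newtonHull P d r₁ x ≤
      (newtonHull P d (t * r₁ + s * r₂) x - s * newtonHull P d r₂ x) / t := by
    rw [hHull r₁ x]
    refine csSup_le (hne x r₁) fun y₁ hy₁ => ?_
    rw [le_div_iff₀ ht']
    have h2 : newtonHull P d r₂ x ≤
        (newtonHull P d (t * r₁ + s * r₂) x - t * y₁) / s := by
      rw [hHull r₂ x]
      refine csSup_le (hne x r₂) fun y₂ hy₂ => ?_
      rw [le_div_iff₀ hs']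
      linarith [Hub y₁ hy₁ y₂ hy₂]
    have h2'' := (le_div_iff₀ hs').mp h2
    linarith
  have h1' := (le_div_iff₀ ht').mp h1
  linarith
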